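/- Let B > 0 and let G be the piecewise indicator kernel on (0,B) × ℝ. Let g : [0,B] → ℝ be continuous and suppose ∫₀^B g(y) G(a,y) dy = 0 for every a ∈ (0,B). Then g(y) = 0 for all y ∈ [0,B]. -/
import Mathlib


open MeasureTheory Set

/-- The piecewise indicator kernel `G` on `(0,B) × ℝ`:
`G(a,y) = 𝟙_{(B−a,B)}(y)` if `a ≤ B/2`, and
`G(a,y) = 𝟙_{(B−a,2(B−a))}(y) − 𝟙_{(2(B−a),B)}(y)` otherwise. -/
noncomputable def Gker (B a y : ℝ) : ℝ :=
  if a ≤ B / 2 then (Set.Ioo (B - a) B).indicator 1 y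
  else (Set.Ioo (B - a) (2 * (B - a))).indicator 1 y
    - (Set.Ioo (2 * (B - a)) B).indicator 1 y

theorem stmt8 (B : ℝ) (hB : 0 < B) (g : ℝ → ℝ) (hg : ContinuousOn g (Set.Icc 0 B))
    (hint : ∀ a ∈ Set.Ioo (0:ℝ) B, (∫ y in (0:ℝ)..B, g y * Gker B a y) = 0) :
    ∀ y ∈ Set.Icc (0:ℝ) B, g y = 0 := by
  have hgI : IntegrableOn g (Set.Ioc 0 B) := (hg.integrableOn_Icc).mono_set Set.Ioc_subset_Icc_self
  have hII : ∀ s u : ℝ, 0 ≤ s → s ≤ B → 0 ≤ u → u ≤ B → IntervalIntegrable g volume s u := by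
    intro s u hs hsB hu huB
    apply ContinuousOn.intervalIntegrable
    apply hg.mono
    rw [Set.uIcc_eq_union]
    exact Set.union_subset (Set.Icc_subset_Icc hs huB) (Set.Icc_subset_Icc hu hsB)
  have key : ∀ l r : ℝ, 0 ≤ l → l ≤ r → r ≤ B →
      (∫ y in Set.Ioc 0 B, Set.indicator (Set.Ioo l r) g y) = ∫ y in l..r, g y := by
    intro l r hl hlr hrB
    have hsub : Set.Ioo l r ⊆ Set.Ioc 0 B := fun y hy =>
      ⟨lt_of_le_of_lt hl hy.1, le_of_lt (lt_of_lt_of_le hy.2 hrB)⟩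
    rw [MeasureTheory.setIntegral_indicator measurableSet_Ioo,
      Set.inter_eq_self_of_subset_right hsub,
      ← MeasureTheory.integral_Ioc_eq_integral_Ioo,
      ← intervalIntegral.integral_of_le hlr]
  -- Step A : the tail integral vanishes for s ∈ [B/2, B)
  have hA : ∀ s : ℝ, B / 2 ≤ s → s < B → (∫ y in s..B, g y) = 0 := by
    intro s hs hsB
    have ha := hint (B - s) ⟨by linarith, by linarith⟩
    have h1 : B - (B - s) = s := by ring
    rw [show Gker B (B - s) = fun y => (Set.Ioo s B).indicator 1 y from ?_] at ha
    · rw [intervalIntegral.integral_of_le hB.le] at ha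
      have h2 : ∀ y : ℝ, g y * (Set.Ioo s B).indicator 1 y = (Set.Ioo s B).indicator g y := by
        intro y; by_cases h : y ∈ Set.Ioo s B <;> simp [h]
      simp only [h2] at ha
      rw [key s B (by linarith) hsB.le le_rfl] at ha
      exact ha
    · funext y
      rw [Gker, if_pos (by linarith), h1]
  -- Step B : the doubling identity for t ∈ (0, B/2)
  have hBstep : ∀ t : ℝ, 0 < t → t < B / 2 →
      (∫ y in t..B, g y) = 2 * ∫ y in (2 * t)..B, g y := by
    intro t ht htB
    have ha := hint (B - t) ⟨by linarith, by linarith⟩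
    have h1 : B - (B - t) = t := by ring
    rw [show Gker B (B - t) = fun y => (Set.Ioo t (2 * t)).indicator 1 y
        - (Set.Ioo (2 * t) B).indicator 1 y from ?_] at ha
    · rw [intervalIntegral.integral_of_le hB.le] at ha
      have h2 : ∀ y : ℝ, g y * ((Set.Ioo t (2 * t)).indicator 1 y
          - (Set.Ioo (2 * t) B).indicator 1 y)
          = (Set.Ioo t (2 * t)).indicator g y - (Set.Ioo (2 * t) B).indicator g y := by
        intro y
        by_cases h : y ∈ Set.Ioo t (2 * t) <;> by_cases h' : y ∈ Set.Ioo (2 * t) B <;>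
          simp [h, h'] <;> ring
      simp only [h2] at ha
      rw [MeasureTheory.integral_sub (hgI.indicator measurableSet_Ioo)
        (hgI.indicator measurableSet_Ioo),
        key t (2 * t) ht.le (by linarith) (by linarith),
        key (2 * t) B (by linarith) (by linarith) le_rfl] at ha
      have hadd := intervalIntegral.integral_add_adjacent_intervals
        (hII t (2 * t) ht.le (by linarith) (by linarith) (by linarith))
        (hII (2 * t) B (by linarith) (by linarith) hB.le le_rfl)
      linarith
    · funext y
      rw [Gker, if_neg (by linarith), h1]
  -- Step C : the tail integral vanishes on all of (0, B)
  have hF : ∀ t : ℝ, 0 < t → t < B → (∫ y in t..B, g y) = 0 := by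
    have main : ∀ n : ℕ, ∀ t : ℝ, 0 < t → t < B → B / 2 ≤ 2 ^ n * t →
        (∫ y in t..B, g y) = 0 := by
      intro n
      induction n with
      | zero =>
        intro t ht htB h
        exact hA t (by simpa using h) htB
      | succ n ih =>
        intro t ht htB h
        by_cases hc : B / 2 ≤ t
        · exact hA t hc htB
        · push_neg at hc
          rw [hBstep t ht hc, ih (2 * t) (by linarith) (by linarith)
            (by rw [pow_succ] at h; linarith [h, mul_comm ((2:ℝ) ^ n) 2])]
          ring
    intro t ht htB
    obtain ⟨n, hn⟩ := pow_unbounded_of_one_lt (B / (2 * t)) (one_lt_two (α := ℝ))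
    refine main n t ht htB ?_
    have h2t : (0:ℝ) < 2 * t := by linarith
    rw [div_lt_iff₀ h2t] at hn
    nlinarith [pow_pos (by norm_num : (0:ℝ) < 2) n]
  -- Step D : g = 0 on the open interval via FTC
  have hIoo : ∀ t ∈ Set.Ioo (0:ℝ) B, g t = 0 := by
    intro t ht
    have hct : ContinuousAt g t := hg.continuousAt (Icc_mem_nhds ht.1 ht.2)
    have hd : HasDerivAt (fun u => ∫ y in (t / 2)..u, g y) (g t) t := by
      refine intervalIntegral.integral_hasDerivAt_right
        (hII (t / 2) t (by linarith [ht.1]) (by linarith [ht.2]) ht.1.le ht.2.le)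
        ?_ hct
      exact ContinuousOn.stronglyMeasurableAtFilter isOpen_Ioo
        (hg.mono Set.Ioo_subset_Icc_self) t ht
    have hzero : (fun u => ∫ y in (t / 2)..u, g y) =ᶠ[nhds t] fun _ => (0:ℝ) := by
      filter_upwards [Ioo_mem_nhds ht.1 ht.2] with u hu
      have hadd := intervalIntegral.integral_add_adjacent_intervals
        (hII (t / 2) u (by linarith [ht.1]) (by linarith [ht.2]) hu.1.le hu.2.le)
        (hII u B hu.1.le hu.2.le hB.le le_rfl)
      have h1 := hF (t / 2) (by linarith [ht.1]) (by linarith [ht.2])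
      have h2 := hF u hu.1 hu.2
      show (∫ y in (t / 2)..u, g y) = 0
      linarith
    have hd0 : HasDerivAt (fun u => ∫ y in (t / 2)..u, g y) 0 t :=
      (hasDerivAt_const t (0:ℝ)).congr_of_eventuallyEq hzero
    exact hd.unique hd0
  -- endpoints by continuity
  have h0 : g 0 = 0 := by
    have hc : ContinuousWithinAt g (Set.Ioi 0) 0 := by
      refine (hg 0 ⟨le_rfl, hB.le⟩).mono_of_mem_nhdsWithin ?_
      exact Filter.mem_of_superset (Ioc_mem_nhdsGT_of_mem ⟨le_rfl, hB⟩) Set.Ioc_subset_Icc_self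
    have h2 : Filter.Tendsto g (nhdsWithin 0 (Set.Ioi 0)) (nhds 0) := by
      refine Filter.Tendsto.congr' ?_ tendsto_const_nhds
      filter_upwards [Ioo_mem_nhdsGT_of_mem ⟨le_rfl, hB⟩] with u hu
      exact (hIoo u hu).symm
    exact tendsto_nhds_unique hc h2
  have hBend : g B = 0 := by
    have hc : ContinuousWithinAt g (Set.Iio B) B := by
      refine (hg B ⟨hB.le, le_rfl⟩).mono_of_mem_nhdsWithin ?_
      exact Filter.mem_of_superset (Ico_mem_nhdsLT_of_mem ⟨hB, le_rfl⟩) Set.Ico_subset_Icc_self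
    have h2 : Filter.Tendsto g (nhdsWithin B (Set.Iio B)) (nhds 0) := by
      refine Filter.Tendsto.congr' ?_ tendsto_const_nhds
      filter_upwards [Ioo_mem_nhdsLT_of_mem ⟨hB, le_rfl⟩] with u hu
      exact (hIoo u hu).symm
    exact tendsto_nhds_unique hc h2
  intro y hy
  rcases eq_or_lt_of_le hy.1 with h | h
  · rw [← h]; exact h0
  rcases eq_or_lt_of_le hy.2 with h' | h'
  · rw [h']; exact hBend
  exact hIoo y ⟨h, h'⟩
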